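/- arXiv:1504.01341 — 5 statements merged into one kernel-verified Lean document; each statement's English description precedes it below -/
import Mathlib

section
/- Let F be a field of characteristic p > 0, R an F-algebra, and D a derivation on R. Then for every a ∈ R and every natural number m, D^{p^m}(a) = x^{p^m}·a − a·x^{p^m} in the differential polynomial ring R[x;D]. -/
/-!
Left and right multiplication by `x` are commuting operators on `T`, so in characteristic `p`
the inner derivation `ad x = L_x - R_x` satisfies `(ad x)^{p^m} = L_x^{p^m} - R_x^{p^m} = ad (x^{p^m})`.
The relation `x·a - a·x = D a` says that `ι` intertwines `D` with `ad x`, hence also their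
`p^m`-th iterates.
-/

open LinearMap in
theorem commutator_iterate_expChar_pow {F T : Type*} [Field F] [Ring T] [Algebra F T]
    (p : ℕ) [ExpChar F p] (x t : T) (m : ℕ) :
    (fun s ↦ x * s - s * x)^[p ^ m] t = x ^ p ^ m * t - t * x ^ p ^ m := by
  rcases subsingleton_or_nontrivial T with _ | _
  · exact Subsingleton.elim _ _
  have : ExpChar (Module.End F T) p :=
    expChar_of_injective_algebraMap (algebraMap F _).injective p
  have hfrob := congr($(sub_pow_expChar_pow_of_commute p m (commute_mulLeft_right (R := F) x x)) t)
  simp only [pow_mulLeft, pow_mulRight, Module.End.coe_pow, LinearMap.sub_apply, mulLeft_apply,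
    mulRight_apply] at hfrob
  exact hfrob

theorem stmt_2_general {F : Type*} [Field F] (p : ℕ) [Fact p.Prime] [CharP F p]
    {R T : Type*} [NonUnitalRing R] [Module F R]
    [Ring T] [Algebra F T]
    (D : R → R)
    (ι : R →ₙₐ[F] T) (x : T)
    (hx : ∀ a : R, x * ι a - ι a * x = ι (D a))
    (a : R) (m : ℕ) :
    ι (D^[p ^ m] a) = x ^ (p ^ m) * ι a - ι a * x ^ (p ^ m) := by
  have hconj : Function.Semiconj ι D (fun s ↦ x * s - s * x) := fun a ↦ (hx a).symm
  rw [hconj.iterate_right (p ^ m) a, commutator_iterate_expChar_pow (F := F) p]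

/-- Over a field of characteristic `p > 0`, in the differential polynomial ring `R[x;D]`,
`D^{p^m}(a) = x^{p^m}·a − a·x^{p^m}`. -/
theorem stmt_2 {F : Type*} [Field F] (p : ℕ) [Fact p.Prime] [CharP F p]
    {R T : Type*} [NonUnitalRing R] [Module F R] [SMulCommClass F R R] [IsScalarTower F R R]
    [Ring T] [Algebra F T]
    (D : R → R) (hadd : ∀ a b : R, D (a + b) = D a + D b)
    (hsmul : ∀ (c : F) (a : R), D (c • a) = c • D a)
    (hleib : ∀ a b : R, D (a * b) = D a * b + a * D b)
    (ι : R →ₙₐ[F] T) (x : T)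
    (hx : ∀ a : R, x * ι a - ι a * x = ι (D a))
    (a : R) (m : ℕ) :
    ι (D^[p ^ m] a) = x ^ (p ^ m) * ι a - ι a * x ^ (p ^ m) :=
  stmt_2_general p D ι x hx a m
end

section
/- Let F be a field of characteristic p > 0, R an F-algebra, and D a locally nilpotent derivation on R (for every a ∈ R there is n with D^n(a) = 0). If the differential polynomial ring R[x;D] is Jacobson radical, then R is a nil ring. -/
/-!
Pick `q = p ^ n` with `D^[q] a = 0`. In characteristic `p` the inner derivation `[x, -]` satisfies
`[x, -]^q = [x ^ q, -]`, so `δ = D^[q]` is again a locally nilpotent derivation, now killing `a`,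
and `x ^ q * c = c * x ^ q + δ c`. Let `s = ∑ c_i x^i` be the quasi-inverse of `t = a x^q`.
Comparing coefficients in `t + s + t s = 0` gives
`c_i + a δ(c_i) = -[i = q] a - a c_{i-q}`. The map `u ↦ u + a δ u` is injective and fixes the
`δ`-constants, so `c_0 = 0` and `c_{jq} = (-a)^j` for every `j ≥ 1`; once `jq` exceeds the degree
of `s` this reads `(-a)^j = 0`.
-/

open Finset Function

section CharP

variable (F : Type*) {T : Type*} [Field F] [Ring T] [Algebra F T]

theorem pow_char_pow_mul_sub_mul (p : ℕ) [Fact p.Prime] [CharP F p] (x b : T) (k : ℕ) :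
    x ^ p ^ k * b - b * x ^ p ^ k = (fun c => x * c - c * x)^[p ^ k] b := by
  nontriviality T
  have := charP_of_injective_algebraMap' F (A := Module.End F T) p
  have h := congr($(sub_pow_char_pow_of_commute p k
    (LinearMap.commute_mulLeft_right (R := F) x x)) b)
  rw [LinearMap.pow_mulLeft, LinearMap.pow_mulRight, Module.End.pow_apply] at h
  exact h.symm

theorem pow_char_pow_mul_sub_mul_eq_iterate {R : Type*} (p : ℕ) [Fact p.Prime] [CharP F p]
    {ι : R → T} {x : T} {D : R → R} (hx : ∀ a, x * ι a - ι a * x = ι (D a))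
    (k : ℕ) (a : R) : x ^ p ^ k * ι a - ι a * x ^ p ^ k = ι (D^[p ^ k] a) := by
  have hD : Semiconj ι D (fun c => x * c - c * x) := fun a => (hx a).symm
  rw [pow_char_pow_mul_sub_mul F, hD.iterate_right _ a]

end CharP

section Commutator

variable {R T G : Type*} [NonUnitalRing R] [Ring T] [FunLike G R T]
  [NonUnitalRingHomClass G R T] {ι : G}

theorem leibniz_of_mul_sub_mul_eq (hι : Injective ι) {y : T} {δ : R → R}
    (h : ∀ a, y * ι a - ι a * y = ι (δ a)) (a b : R) : δ (a * b) = δ a * b + a * δ b := by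
  apply hι
  rw [map_add, map_mul, map_mul, ← h, ← h, ← h, map_mul]
  noncomm_ring

end Commutator

section LocallyNilpotent

variable {R : Type*} [NonUnitalRing R] (δ : R →+ R) {a : R}

theorem iterate_map_eq_zero_of_le {u : R} {n N : ℕ} (h : δ^[n] u = 0) (hn : n ≤ N) :
    δ^[N] u = 0 := by
  rw [← Nat.sub_add_cancel hn, iterate_add_apply, h, iterate_map_zero]

theorem exists_iterate_iterate_eq_zero (hδ : ∀ u, ∃ k, δ^[k] u = 0) {q : ℕ} (hq : 0 < q)
    (u : R) : ∃ k, (δ^[q])^[k] u = 0 := by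
  obtain ⟨k, hk⟩ := hδ u
  refine ⟨k, ?_⟩
  rw [← iterate_mul]
  exact iterate_map_eq_zero_of_le δ hk (Nat.le_mul_of_pos_left k hq)

theorem eq_zero_of_add_mul_map_eq_zero (hδ : ∀ u, ∃ k, δ^[k] u = 0)
    (ha : ∀ w, δ (a * w) = a * δ w) {u : R} (h : u + a * δ u = 0) : u = 0 := by
  obtain ⟨k, hk⟩ := hδ u
  induction k generalizing u with
  | zero => exact hk
  | succ k ih =>
    have hδu : δ u = 0 := ih (by rw [← ha, ← map_add, h, map_zero]) hk
    simpa [hδu] using h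

theorem eq_of_add_mul_map_eq (hδ : ∀ u, ∃ k, δ^[k] u = 0)
    (ha : ∀ w, δ (a * w) = a * δ w) {u w : R} (h : u + a * δ u = w) (hw : δ w = 0) :
    u = w :=
  sub_eq_zero.mp <| eq_zero_of_add_mul_map_eq_zero δ hδ ha <| by
    rw [map_sub, hw, sub_zero, sub_add_eq_add_sub, h, sub_self]

end LocallyNilpotent

section DifferentialPolynomial

variable {R T G : Type*} [NonUnitalRing R] [Ring T] [FunLike G R T]
  [NonUnitalRingHomClass G R T] (ι : G) (x : T)

theorem sum_range_ite_eq_mul_pow {N q : ℕ} (hq : q ≤ N) (b : R) :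
    ∑ i ∈ range (N + 1), ι (if i = q then b else 0) * x ^ i = ι b * x ^ q := by
  simp_rw [apply_ite ι, map_zero, ite_mul, zero_mul]
  rw [sum_ite_eq', if_pos (mem_range.mpr (Nat.lt_succ_of_le hq))]

theorem sum_range_eq_of_forall_lt_eq_zero {m N : ℕ} (hN : m ≤ N) {c : ℕ → R}
    (hc : ∀ i, m < i → c i = 0) :
    ∑ i ∈ range (m + 1), ι (c i) * x ^ i = ∑ i ∈ range (N + 1), ι (c i) * x ^ i := by
  refine sum_subset (range_subset_range.mpr (by omega)) fun i _ hi => ?_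
  rw [hc i (by simpa using hi), map_zero, zero_mul]

theorem sum_range_mul_pow_add (q m : ℕ) (c : ℕ → R) :
    ∑ i ∈ range (m + 1), ι (c i) * x ^ (q + i) =
      ∑ i ∈ range (q + m + 1), ι (if q ≤ i then c (i - q) else 0) * x ^ i := by
  rw [add_assoc, sum_range_add _ q, sum_eq_zero (s := range q) fun i hi => ?_, zero_add]
  · simp
  · rw [if_neg (by simpa using hi), map_zero, zero_mul]

theorem mul_pow_mul_sum_range {q : ℕ} {δ : R → R}
    (hxq : ∀ b, x ^ q * ι b - ι b * x ^ q = ι (δ b)) (a : R) (m : ℕ) (c : ℕ → R) :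
    ι a * x ^ q * ∑ i ∈ range (m + 1), ι (c i) * x ^ i =
      ∑ i ∈ range (m + 1), ι (a * c i) * x ^ (q + i) +
        ∑ i ∈ range (m + 1), ι (a * δ (c i)) * x ^ i := by
  rw [mul_sum, ← sum_add_distrib]
  refine sum_congr rfl fun i _ => ?_
  rw [← mul_assoc, mul_assoc (ι a), sub_eq_iff_eq_add'.mp (hxq _), map_mul, map_mul, pow_add]
  noncomm_ring

theorem coeff_eq_zero_of_add_add_mul_eq_zero
    (hfree : ∀ (n : ℕ) (c : ℕ → R),
      ∑ i ∈ range (n + 1), ι (c i) * x ^ i = 0 → ∀ i ≤ n, c i = 0)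
    {q : ℕ} {δ : R →+ R} (hxq : ∀ b, x ^ q * ι b - ι b * x ^ q = ι (δ b)) (a : R)
    {m : ℕ} {c : ℕ → R} (hc : ∀ i, m < i → c i = 0)
    (h : ι a * x ^ q + ∑ i ∈ range (m + 1), ι (c i) * x ^ i +
      ι a * x ^ q * ∑ i ∈ range (m + 1), ι (c i) * x ^ i = 0) :
    ∀ i ≤ q + m, (if i = q then a else 0) + c i +
      ((if q ≤ i then a * c (i - q) else 0) + a * δ (c i)) = 0 := by
  refine hfree (q + m) _ ?_
  have hδc : ∀ i, m < i → a * δ (c i) = 0 := fun i hi => by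
    rw [hc i hi, map_zero, mul_zero]
  simp only [map_add, add_mul, sum_add_distrib]
  rw [sum_range_ite_eq_mul_pow ι x (by omega),
    ← sum_range_eq_of_forall_lt_eq_zero ι x (by omega) hc,
    ← sum_range_eq_of_forall_lt_eq_zero ι x (by omega) hδc,
    ← sum_range_mul_pow_add ι x q m fun i => a * c i, ← mul_pow_mul_sum_range ι x hxq, h]

theorem pow_eq_zero_of_coeff_eq_zero (δ : R →+ R) (hδ : ∀ u, ∃ k, δ^[k] u = 0) {a : R}
    (hδa : δ a = 0) (ha : ∀ w, δ (a * w) = a * δ w) {q m : ℕ} (hq : 0 < q) {c : ℕ → R}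
    (hc : ∀ i, m < i → c i = 0)
    (hcoeff : ∀ i ≤ q + m, (if i = q then a else 0) + c i +
      ((if q ≤ i then a * c (i - q) else 0) + a * δ (c i)) = 0) :
    ∃ n, 0 < n ∧ ι a ^ n = 0 := by
  have hc0 : c 0 = 0 :=
    eq_of_add_mul_map_eq δ hδ ha (by simpa [hq.ne, hq.ne'] using hcoeff 0 (by omega))
      (map_zero δ)
  have chain : ∀ j, 1 ≤ j → j * q ≤ q + m →
      δ (c (j * q)) = 0 ∧ ι (c (j * q)) = (-ι a) ^ j := by
    intro j hj
    induction j, hj using Nat.le_induction with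
    | base =>
      intro _
      have hq' := hcoeff q (by omega)
      simp only [if_pos, le_refl, Nat.sub_self, hc0, mul_zero, zero_add] at hq'
      have hcq : c q = -a := eq_of_add_mul_map_eq δ hδ ha
        (by rw [eq_neg_iff_add_eq_zero, ← hq']; abel) (by rw [map_neg, hδa, neg_zero])
      simp [hcq, hδa]
    | succ j hj ih =>
      intro hle
      obtain ⟨hδj, hιj⟩ := ih (le_trans (Nat.mul_le_mul_right q (Nat.le_succ j)) hle)
      have hj' := hcoeff ((j + 1) * q) hle
      rw [if_neg (by nlinarith), if_pos (by nlinarith), show (j + 1) * q - q = j * q by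
        rw [add_mul, one_mul, Nat.add_sub_cancel], zero_add] at hj'
      have hcj : c ((j + 1) * q) = -(a * c (j * q)) := eq_of_add_mul_map_eq δ hδ ha
        (by rw [eq_neg_iff_add_eq_zero, ← hj']; abel)
        (by rw [map_neg, ha, hδj, mul_zero, neg_zero])
      exact ⟨by rw [hcj, map_neg, ha, hδj, mul_zero, neg_zero],
        by rw [hcj, map_neg, map_mul, hιj, pow_succ', neg_mul]⟩
  obtain ⟨-, hJ⟩ := chain (m / q + 1) (Nat.le_add_left 1 _) (by
    rw [add_mul, one_mul, add_comm q]; exact Nat.add_le_add_right (Nat.div_mul_le_self m q) q)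
  rw [hc _ (by simpa [mul_comm] using Nat.lt_mul_div_succ m hq), map_zero] at hJ
  exact ⟨m / q + 1, Nat.succ_pos _, by rw [← neg_neg (ι a), neg_pow, ← hJ, mul_zero]⟩

end DifferentialPolynomial

theorem stmt_5_general {F : Type*} [Field F] (p : ℕ) [Fact p.Prime] [CharP F p]
    {R T : Type*} [NonUnitalRing R] [Module F R]
    [Ring T] [Algebra F T]
    (D : R → R) (hadd : ∀ a b : R, D (a + b) = D a + D b)
    (hln : ∀ a : R, ∃ n : ℕ, D^[n] a = 0)
    (ι : R →ₙₐ[F] T) (hι : Function.Injective ι) (x : T)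
    (hx : ∀ a : R, x * ι a - ι a * x = ι (D a))
    (S : Set T)
    (hS : S = {t : T | ∃ (n : ℕ) (c : ℕ → R),
      t = ∑ i ∈ Finset.range (n + 1), ι (c i) * x ^ i})
    (hfree : ∀ (n : ℕ) (c : ℕ → R),
      (∑ i ∈ Finset.range (n + 1), ι (c i) * x ^ i) = 0 → ∀ i ≤ n, c i = 0)
    (hjac : ∀ t ∈ S, ∃ s ∈ S, t + s + t * s = 0 ∧ t + s + s * t = 0) :
    ∀ a : R, ∃ n : ℕ, 0 < n ∧ ι a ^ n = 0 := by
  intro a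
  obtain ⟨n, hn⟩ := hln a
  let D' : R →+ R := AddMonoidHom.mk' D hadd
  set q := p ^ n
  have hq : 0 < q := pow_pos (Fact.out : p.Prime).pos n
  let δ : R →+ R := AddMonoidHom.mk' D^[q] (iterate_map_add D' q)
  have hcomm : ∀ b, x ^ q * ι b - ι b * x ^ q = ι (δ b) :=
    pow_char_pow_mul_sub_mul_eq_iterate F p hx n
  have hδa : δ a = 0 :=
    iterate_map_eq_zero_of_le D' hn (Nat.lt_pow_self (Fact.out : p.Prime).one_lt).le
  have hδmul : ∀ w, δ (a * w) = a * δ w := fun w => by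
    rw [leibniz_of_mul_sub_mul_eq hι hcomm, hδa, zero_mul, zero_add]
  have htS : ι a * x ^ q ∈ S :=
    hS ▸ ⟨q, fun i => if i = q then a else 0, (sum_range_ite_eq_mul_pow ι x le_rfl a).symm⟩
  obtain ⟨s, hsS, hts, -⟩ := hjac _ htS
  rw [hS] at hsS
  obtain ⟨m, c, rfl⟩ := hsS
  let c' : ℕ → R := fun i => if i ≤ m then c i else 0
  have hc' : ∀ i, m < i → c' i = 0 := fun i hi => if_neg (by omega)
  have hsum :
      ∑ i ∈ range (m + 1), ι (c i) * x ^ i = ∑ i ∈ range (m + 1), ι (c' i) * x ^ i :=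
    sum_congr rfl fun i hi => by simp only [c', if_pos (Nat.lt_succ_iff.mp (mem_range.mp hi))]
  rw [hsum] at hts
  exact pow_eq_zero_of_coeff_eq_zero ι δ (exists_iterate_iterate_eq_zero D' hln hq) hδa hδmul hq
    hc'
    (coeff_eq_zero_of_add_add_mul_eq_zero ι x hfree hcomm a hc' hts)

/-- Let `F` be a field of characteristic `p > 0`, `R` an `F`-algebra and `D` a locally
nilpotent derivation on `R`.  The differential polynomial ring `R[x;D]` is represented as
the set `S` of all `∑ ι(c_i) x^i` inside an ambient `F`-algebra `T`, with
`x·a − a·x = D a` and the powers of `x` left-independent over `R`.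
If `R[x;D]` is Jacobson radical (every element of `S` is quasi-invertible in `S`),
then `R` is nil. -/
theorem stmt_5 {F : Type*} [Field F] (p : ℕ) [Fact p.Prime] [CharP F p]
    {R T : Type*} [NonUnitalRing R] [Module F R] [SMulCommClass F R R] [IsScalarTower F R R]
    [Ring T] [Algebra F T]
    (D : R → R) (hadd : ∀ a b : R, D (a + b) = D a + D b)
    (hsmul : ∀ (c : F) (a : R), D (c • a) = c • D a)
    (hleib : ∀ a b : R, D (a * b) = D a * b + a * D b)
    (hln : ∀ a : R, ∃ n : ℕ, D^[n] a = 0)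
    (ι : R →ₙₐ[F] T) (hι : Function.Injective ι) (x : T)
    (hx : ∀ a : R, x * ι a - ι a * x = ι (D a))
    (S : Set T)
    (hS : S = {t : T | ∃ (n : ℕ) (c : ℕ → R),
      t = ∑ i ∈ Finset.range (n + 1), ι (c i) * x ^ i})
    (hfree : ∀ (n : ℕ) (c : ℕ → R),
      (∑ i ∈ Finset.range (n + 1), ι (c i) * x ^ i) = 0 → ∀ i ≤ n, c i = 0)
    (hjac : ∀ t ∈ S, ∃ s ∈ S, t + s + t * s = 0 ∧ t + s + s * t = 0) :
    ∀ a : R, ∃ n : ℕ, 0 < n ∧ ι a ^ n = 0 :=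
  stmt_5_general p D hadd hln ι hι x hx S hS hfree hjac
end

section
/- Let F be a field of characteristic p > 0, R an F-algebra, and D a locally nilpotent derivation on R. Suppose a ∈ R and m is such that D^{p^m}(a) = 0. If a·x^{p^m} is quasi-invertible in R[x;D] and there exists a subring containing a on which D is nilpotent containing the quasi-inverse, then a is nilpotent. -/
/-!
Put `q = p ^ m` and `w = ι (-a) * x ^ q`. Inside `End T` the inner derivation `ad x = L_x - R_x`
commutes with `R_x`, so in characteristic `p` we get `L_x ^ p^t = (ad x) ^ p^t + R_x ^ p^t`: any
element killed by `(ad x) ^ p^t` commutes with `x ^ p^t`. Hence `x ^ q` commutes with `ι a`, and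
`w ^ i = ι (-a) ^ i * x ^ (q * i)`. The quasi-inverse satisfies `s = w + w * s`, so
`s = w + ⋯ + w ^ k + w ^ k * s` for every `k`. Choose `k = p ^ M` so large that `K = q * k`
exceeds both the degree of `s` and the nilpotency index of `D` on `T'`; then `x ^ K` commutes with
the coefficients of `s`, and `w ^ k * s` only has terms of degree `≥ K`. Comparing coefficients in
degree `0` gives `c 0 = 0`, and in degree `K` gives `0 = ι (-a) ^ k * (1 + ι (c 0))`.
-/

open Finset

theorem Commute.pow_prime_pow_of_iterate_commutator_eq_zero {T : Type*} [Ring T] {p : ℕ}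
    (hp : p.Prime) (hpT : (p : T) = 0) {x y : T} {N t : ℕ} (hN : N ≤ p ^ t)
    (hy : (fun z => x * z - z * x)^[N] y = 0) : Commute (x ^ p ^ t) y := by
  set L := LinearMap.mulLeft ℤ x
  set R := LinearMap.mulRight ℤ x
  have hLR : Commute (L - R) R := (LinearMap.commute_mulLeft_right x x).sub_left (.refl R)
  have hpow := LinearMap.congr_fun (hLR.add_pow_prime_pow_eq hp t) y
  have hy' : ((L - R) ^ p ^ t) y = 0 := by
    rw [Module.End.pow_apply, ← Nat.sub_add_cancel hN, Function.iterate_add_apply]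
    exact (congrArg _ hy).trans (Function.iterate_fixed (map_zero (L - R)) _)
  show x ^ p ^ t * y = y * x ^ p ^ t
  simpa [L, R, LinearMap.pow_mulLeft, LinearMap.pow_mulRight, hy', hpT] using hpow

theorem eq_sum_pow_succ_add_pow_mul {M : Type*} [Semiring M] {w s : M} (h : s = w + w * s)
    (k : ℕ) : s = ∑ i ∈ range k, w ^ (i + 1) + w ^ k * s := by
  induction k with
  | zero => simp
  | succ k ih =>
    calc s = ∑ i ∈ range k, w ^ (i + 1) + w ^ k * (w + w * s) := by rwa [← h]
      _ = _ := by rw [sum_range_succ, mul_add, ← mul_assoc, ← pow_succ, add_assoc]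

theorem exists_map_eq_pow_succ {F R T : Type*} [Semigroup R] [Monoid T] [FunLike F R T]
    [MulHomClass F R T] (ι : F) (a : R) (i : ℕ) : ∃ b, ι b = ι a ^ (i + 1) := by
  induction i with
  | zero => exact ⟨a, (pow_one _).symm⟩
  | succ i ih =>
    obtain ⟨b, hb⟩ := ih
    exact ⟨b * a, by rw [map_mul, hb, ← pow_succ]⟩

section SumMulPow

variable {R T : Type*} [NonUnitalRing R] [Ring T]

noncomputable def sumMulPow (ι : R →+ T) (x : T) : (ℕ →₀ R) →+ T :=
  Finsupp.liftAddHom fun j => (AddMonoidHom.mulRight (x ^ j)).comp ι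

@[simp]
theorem sumMulPow_single (ι : R →+ T) (x : T) (j : ℕ) (r : R) :
    sumMulPow ι x (Finsupp.single j r) = ι r * x ^ j := by
  simp [sumMulPow]

theorem sumMulPow_injective {ι : R →+ T} {x : T}
    (hfree : ∀ (n : ℕ) (c : ℕ → R),
      (∑ i ∈ range (n + 1), ι (c i) * x ^ i) = 0 → ∀ i ≤ n, c i = 0) :
    Function.Injective (sumMulPow ι x) := by
  refine (injective_iff_map_eq_zero _).mpr fun f hf => Finsupp.ext fun i => ?_
  set n := max i (f.support.sup id)
  have hsupp : f.support ⊆ range (n + 1) := fun j hj =>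
    mem_range.mpr (Nat.lt_succ_of_le ((le_sup (f := id) hj).trans (le_max_right _ _)))
  refine hfree n f ?_ i (le_max_left _ _)
  rw [← hf, sumMulPow, Finsupp.liftAddHom_apply, Finsupp.sum_of_support_subset f hsupp]
  · rfl
  · simp

theorem pow_eq_zero_of_eq_add_mul_self {G : Type*} [FunLike G R T] [NonUnitalRingHomClass G R T]
    (ι : G) {x : T}
    (hfree : Function.Injective (sumMulPow (ι : R →+ T) x)) {a : R} {q k n : ℕ} (hq : 0 < q)
    (hn : n < q * k) {c : ℕ → R} {s : T} (hs : s = ∑ j ∈ range (n + 1), ι (c j) * x ^ j)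
    (hxa : Commute (x ^ q) (ι a)) (hxc : ∀ j, Commute (x ^ (q * k)) (ι (c j)))
    (hsw : s = ι a * x ^ q + ι a * x ^ q * s) : ι a ^ k = 0 := by
  obtain ⟨k, rfl⟩ := Nat.exists_eq_add_one.mpr (Nat.pos_of_mul_pos_left (n.zero_le.trans_lt hn))
  set K := q * (k + 1)
  choose b hb using exists_map_eq_pow_succ ι a
  have hpow : ∀ i, (ι a * x ^ q) ^ (i + 1) = ι (b i) * x ^ (q * (i + 1)) := fun i => by
    rw [hxa.symm.mul_pow, ← pow_mul]; exact congrArg (· * _) (hb i).symm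
  have hs' : s = sumMulPow ι x (∑ j ∈ range (n + 1), Finsupp.single j (c j)) := by
    simp only [hs, map_sum, sumMulPow_single, AddMonoidHom.coe_coe]
  have hhead : ∑ i ∈ range (k + 1), (ι a * x ^ q) ^ (i + 1) =
      sumMulPow ι x (∑ i ∈ range (k + 1), Finsupp.single (q * (i + 1)) (b i)) := by
    simp only [hpow, map_sum, sumMulPow_single, AddMonoidHom.coe_coe]
  have htail : (ι a * x ^ q) ^ (k + 1) * s =
      sumMulPow ι x (∑ j ∈ range (n + 1), Finsupp.single (K + j) (b k * c j)) := by
    rw [hpow, hs, mul_sum, map_sum]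
    refine sum_congr rfl fun j _ => ?_
    rw [sumMulPow_single, AddMonoidHom.coe_coe, map_mul, pow_add, mul_assoc,
      ← mul_assoc (x ^ K), (hxc j).eq]
    simp only [mul_assoc]
  have hcoeff := hfree (hs'.symm.trans ((eq_sum_pow_succ_add_pow_mul hsw (k + 1)).trans
    (by rw [hhead, htail, map_add])))
  have h0 := DFunLike.congr_fun hcoeff 0
  have hK := DFunLike.congr_fun hcoeff K
  have hK0 : K ≠ 0 := (n.zero_le.trans_lt hn).ne'
  simp [Finsupp.finsetSum_apply, Finsupp.single_apply, hq.ne', hK0, hn.not_ge, K,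
    Nat.mul_left_cancel_iff hq] at h0 hK
  rw [h0, mul_zero, add_zero] at hK
  rw [← hb, ← hK, map_zero]

end SumMulPow

theorem stmt_6_general {F : Type*} [Field F] (p : ℕ) [Fact p.Prime] [CharP F p]
    {R T : Type*} [NonUnitalRing R] [Module F R]
    [Ring T] [Algebra F T]
    (D : R → R)
    (ι : R →ₙₐ[F] T) (x : T)
    (hx : ∀ a : R, x * ι a - ι a * x = ι (D a))
    (hfree : ∀ (n : ℕ) (c : ℕ → R),
      (∑ i ∈ Finset.range (n + 1), ι (c i) * x ^ i) = 0 → ∀ i ≤ n, c i = 0)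
    (a : R) (m : ℕ) (ha : D^[p ^ m] a = 0)
    (s : T)
    (hq1 : ι a * x ^ (p ^ m) + s + (ι a * x ^ (p ^ m)) * s = 0)
    (n : ℕ) (c : ℕ → R) (hs : s = ∑ i ∈ Finset.range (n + 1), ι (c i) * x ^ i)
    (T' : NonUnitalSubring R) (hcT' : ∀ i, c i ∈ T')
    (hnilD : ∃ N : ℕ, ∀ r ∈ T', D^[N] r = 0) :
    ∃ k : ℕ, 0 < k ∧ ι a ^ k = 0 := by
  have hp : p.Prime := Fact.out
  have hpT : (p : T) = 0 := by rw [← map_natCast (algebraMap F T), CharP.cast_eq_zero, map_zero]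
  have hιD (j : ℕ) (r : R) : (fun z => x * z - z * x)^[j] (ι r) = ι (D^[j] r) :=
    (Function.Semiconj.iterate_right (fun r => (hx r).symm) j r).symm
  obtain ⟨N, hN⟩ := hnilD
  have hcomm {M t : ℕ} {r : R} (hr : D^[M] r = 0) (hMt : M ≤ p ^ t) :
      Commute (x ^ p ^ t) (ι r) :=
    Commute.pow_prime_pow_of_iterate_commutator_eq_zero hp hpT hMt (by rw [hιD, hr, map_zero])
  have hxa : Commute (x ^ p ^ m) (ι (-a)) := by
    rw [map_neg]
    exact (hcomm ha le_rfl).neg_right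
  have hbig : N + n < p ^ m * p ^ (N + n) :=
    (Nat.lt_pow_self hp.one_lt).trans_le (Nat.le_mul_of_pos_left _ (pow_pos hp.pos m))
  have hxc (j : ℕ) : Commute (x ^ (p ^ m * p ^ (N + n))) (ι (c j)) := by
    rw [← pow_add]
    exact hcomm (hN _ (hcT' j)) (by rw [pow_add]; omega)
  have hsw : s = ι (-a) * x ^ p ^ m + ι (-a) * x ^ p ^ m * s := by
    rw [map_neg, neg_mul, neg_mul, ← sub_eq_zero, ← hq1]
    abel
  have hk := pow_eq_zero_of_eq_add_mul_self ι (sumMulPow_injective hfree)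
    (pow_pos hp.pos m) (by omega) hs hxa hxc hsw
  refine ⟨p ^ (N + n), pow_pos hp.pos _, ?_⟩
  rw [← neg_neg (ι a), neg_pow, ← map_neg, hk, mul_zero]

/-- Let `F` be a field of characteristic `p > 0`, `R` an `F`-algebra, `D` a locally nilpotent
derivation on `R`.  Represent `R[x;D]` inside an ambient `F`-algebra `T` as usual.
Suppose `a ∈ R`, `m` satisfies `D^{p^m}(a) = 0`, the element `a·x^{p^m}` is quasi-invertible
in `R[x;D]` with quasi-inverse `s = ∑ ι(c_i) x^i`, and there is a subring `T'` of `R`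
containing `a` and all coefficients `c_i` on which `D` is nilpotent.
Then `a` is nilpotent. -/
theorem stmt_6 {F : Type*} [Field F] (p : ℕ) [Fact p.Prime] [CharP F p]
    {R T : Type*} [NonUnitalRing R] [Module F R] [SMulCommClass F R R] [IsScalarTower F R R]
    [Ring T] [Algebra F T]
    (D : R → R) (hadd : ∀ a b : R, D (a + b) = D a + D b)
    (hsmul : ∀ (c : F) (a : R), D (c • a) = c • D a)
    (hleib : ∀ a b : R, D (a * b) = D a * b + a * D b)
    (hln : ∀ a : R, ∃ n : ℕ, D^[n] a = 0)
    (ι : R →ₙₐ[F] T) (hι : Function.Injective ι) (x : T)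
    (hx : ∀ a : R, x * ι a - ι a * x = ι (D a))
    (hfree : ∀ (n : ℕ) (c : ℕ → R),
      (∑ i ∈ Finset.range (n + 1), ι (c i) * x ^ i) = 0 → ∀ i ≤ n, c i = 0)
    (a : R) (m : ℕ) (ha : D^[p ^ m] a = 0)
    (s : T)
    (hq1 : ι a * x ^ (p ^ m) + s + (ι a * x ^ (p ^ m)) * s = 0)
    (hq2 : ι a * x ^ (p ^ m) + s + s * (ι a * x ^ (p ^ m)) = 0)
    (n : ℕ) (c : ℕ → R) (hs : s = ∑ i ∈ Finset.range (n + 1), ι (c i) * x ^ i)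
    (T' : NonUnitalSubring R) (haT' : a ∈ T') (hcT' : ∀ i, c i ∈ T')
    (hnilD : ∃ N : ℕ, ∀ r ∈ T', D^[N] r = 0) :
    ∃ k : ℕ, 0 < k ∧ ι a ^ k = 0 :=
  stmt_6_general p D ι x hx hfree a m ha s hq1 n c hs T' hcT' hnilD
end

section
/- Let F be an infinite field, A' = F⟨a,b,x⟩ the free associative F-algebra, P the smallest subalgebra containing a, b and closed under c ↦ xc − cx, and D : P → P the derivation D(c) = xc − cx. Then the map f : P[y;D] → A' defined F-linearly by f(p y^i) = p x^i for p ∈ P is an injective ring homomorphism. -/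
/-!
The graph of `f` is the set `S ⊆ T × F⟨a,b,x⟩` of pairs `(∑ j (c i) y ^ i, ∑ c i x ^ i)`.
Since `y` and `x` satisfy the same commutation relation with the coefficients, `S` is closed
under multiplication, hence a subalgebra. Its projection to `T` is bijective because `T` is
free over `P` with basis `y ^ i`, so `S` is the graph of an algebra homomorphism `f`.
Injectivity of `f` amounts to the powers of `x` being left independent over `P`: substituting
`x ↦ x + X` with `X` a central polynomial variable fixes `P` and turns `∑ c i x ^ i` into the
Taylor shift of `∑ c i X ^ i`, which vanishes only if every `c i` does.
-/

/-- `P`: the smallest `F`-subalgebra of `F⟨a,b,x⟩` containing `a, b` and closed under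
`c ↦ xc − cx`. -/
def Psub (F : Type*) [Field F] : Subalgebra F (FreeAlgebra F (Fin 3)) :=
  sInf {S : Subalgebra F (FreeAlgebra F (Fin 3)) |
    FreeAlgebra.ι F (0 : Fin 3) ∈ S ∧ FreeAlgebra.ι F (1 : Fin 3) ∈ S ∧
    ∀ c ∈ S, FreeAlgebra.ι F (2 : Fin 3) * c - c * FreeAlgebra.ι F (2 : Fin 3) ∈ S}

open Polynomial

namespace Psub

variable {F : Type*} [Field F]

lemma commutator_mem {c : FreeAlgebra F (Fin 3)} (hc : c ∈ Psub F) :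
    FreeAlgebra.ι F 2 * c - c * FreeAlgebra.ι F 2 ∈ Psub F := by
  rw [Psub, Algebra.mem_sInf] at hc ⊢
  exact fun S hS => hS.2.2 c (hc S hS)

variable (F) in
noncomputable def shiftX :
    FreeAlgebra F (Fin 3) →ₐ[F] (FreeAlgebra F (Fin 3))[X] :=
  FreeAlgebra.lift F fun i => C (FreeAlgebra.ι F i) + if i = 2 then X else 0

lemma shiftX_ι_two : shiftX F (FreeAlgebra.ι F 2) = X + C (FreeAlgebra.ι F 2) := by
  simp [shiftX, add_comm]

lemma shiftX_coe (p : Psub F) : shiftX F p = C (p : FreeAlgebra F (Fin 3)) := by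
  suffices Psub F ≤ AlgHom.equalizer (shiftX F) CAlgHom from this p.2
  refine sInf_le ⟨by simp [shiftX], by simp [shiftX], fun c (hc : shiftX F c = C c) => ?_⟩
  change shiftX F _ = C _
  rw [map_sub, map_mul, map_mul, shiftX_ι_two, hc, C_sub, C_mul, C_mul, add_mul, mul_add,
    X_mul]
  abel

lemma eq_zero_of_sum_mul_pow_eq_zero (n : ℕ) (c : ℕ → Psub F)
    (h : ∑ i ∈ Finset.range (n + 1),
      (c i : FreeAlgebra F (Fin 3)) * FreeAlgebra.ι F 2 ^ i = 0) :
    ∀ i ≤ n, c i = 0 := by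
  set f : (FreeAlgebra F (Fin 3))[X] :=
    ∑ i ∈ Finset.range (n + 1), monomial i (c i : FreeAlgebra F (Fin 3))
  have hf : taylor (FreeAlgebra.ι F 2) f = 0 := by
    simpa [f, map_sum, taylor_monomial, shiftX_coe, shiftX_ι_two] using congrArg (shiftX F) h
  intro i hi
  have := congrArg (coeff · i) ((taylor_eq_zero _ _).mp hf)
  simpa [f, finsetSum_coeff, coeff_monomial, Nat.lt_succ_of_le hi] using this

end Psub

section SkewEval

variable {F P R R' : Type*} [CommSemiring F] [Ring P] [Algebra F P]
  [Ring R] [Algebra F R] [Ring R'] [Algebra F R']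

/-- The image of `∑ c i y ^ i ∈ P[y;D]` under `p ↦ J p`, `y ↦ Y`. -/
noncomputable def skewEval (J : P →ₐ[F] R) (Y : R) : (ℕ →₀ P) →ₗ[F] R :=
  Finsupp.lsum F fun i => (LinearMap.mulRight F (Y ^ i)).comp J.toLinearMap

variable (J : P →ₐ[F] R) (Y : R)

@[simp]
lemma skewEval_single (i : ℕ) (p : P) : skewEval J Y (Finsupp.single i p) = J p * Y ^ i := by
  simp [skewEval]

lemma skewEval_sum_single (s : Finset ℕ) (c : ℕ → P) :
    skewEval J Y (∑ i ∈ s, Finsupp.single i (c i)) = ∑ i ∈ s, J (c i) * Y ^ i := by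
  simp [map_sum]

lemma skewEval_eq_sum_range {c : ℕ →₀ P} {n : ℕ} (hc : c.support ⊆ Finset.range (n + 1)) :
    skewEval J Y c = ∑ i ∈ Finset.range (n + 1), J (c i) * Y ^ i := by
  simp only [skewEval, Finsupp.lsum_apply]
  exact Finsupp.sum_of_support_subset c hc _ fun i _ => by simp

lemma map_skewEval (φ : R →ₐ[F] R') (c : ℕ →₀ P) :
    φ (skewEval J Y c) = skewEval (φ.comp J) (φ Y) c := by
  induction c using Finsupp.induction_linear with
  | zero => simp
  | add c d hc hd => simp [hc, hd]
  | single i p => simp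

lemma skewEval_injective
    (h : ∀ (n : ℕ) (c : ℕ → P), ∑ i ∈ Finset.range (n + 1), J (c i) * Y ^ i = 0 →
      ∀ i ≤ n, c i = 0) :
    Function.Injective (skewEval J Y) := by
  refine (injective_iff_map_eq_zero _).mpr fun c hc => ?_
  obtain ⟨n, hn⟩ : ∃ n, c.support ⊆ Finset.range (n + 1) := by
    obtain ⟨n, hn⟩ := c.support.exists_nat_subset_range
    exact ⟨n, hn.trans (Finset.range_subset_range.mpr n.le_succ)⟩
  rw [skewEval_eq_sum_range J Y hn] at hc
  ext i
  by_cases hi : i ≤ n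
  · exact h n c hc i hi
  · exact Finsupp.notMem_support_iff.mp fun hmem => hi (by simpa using hn hmem)

lemma mul_mem_range_skewEval_of_forall_single {r : R}
    (h : ∀ i p, r * (J p * Y ^ i) ∈ LinearMap.range (skewEval J Y)) {m : R}
    (hm : m ∈ LinearMap.range (skewEval J Y)) : r * m ∈ LinearMap.range (skewEval J Y) := by
  obtain ⟨c, rfl⟩ := hm
  induction c using Finsupp.induction_linear with
  | zero => simp
  | add c d hc hd => rw [map_add, mul_add]; exact add_mem hc hd
  | single i p => simpa using h i p

variable {J Y}

lemma mul_mem_range_skewEval (hY : ∀ p, ∃ q, Y * J p - J p * Y = J q) {a b : R}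
    (ha : a ∈ LinearMap.range (skewEval J Y)) (hb : b ∈ LinearMap.range (skewEval J Y)) :
    a * b ∈ LinearMap.range (skewEval J Y) := by
  have hYmul : ∀ {m}, m ∈ LinearMap.range (skewEval J Y) →
      Y * m ∈ LinearMap.range (skewEval J Y) :=
    mul_mem_range_skewEval_of_forall_single J Y fun i p => by
      obtain ⟨q, hq⟩ := hY p
      refine ⟨Finsupp.single (i + 1) p + Finsupp.single i q, ?_⟩
      rw [map_add, skewEval_single, skewEval_single, ← hq, sub_mul, pow_succ']
      noncomm_ring
  have hYpow : ∀ k, Y ^ k * b ∈ LinearMap.range (skewEval J Y) := by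
    intro k
    induction k with
    | zero => simpa using hb
    | succ k ih => rw [pow_succ', mul_assoc]; exact hYmul ih
  obtain ⟨c, rfl⟩ := ha
  induction c using Finsupp.induction_linear with
  | zero => simp
  | add c d hc hd => rw [map_add, add_mul]; exact add_mem hc hd
  | single i p =>
    rw [skewEval_single, mul_assoc]
    exact mul_mem_range_skewEval_of_forall_single J Y (fun k q => ⟨Finsupp.single k (p * q),
      by rw [skewEval_single, map_mul, mul_assoc]⟩) (hYpow i)

noncomputable def skewEvalSubalgebra (hY : ∀ p, ∃ q, Y * J p - J p * Y = J q) :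
    Subalgebra F R :=
  (LinearMap.range (skewEval J Y)).toSubalgebra ⟨Finsupp.single 0 1, by simp⟩
    fun _ _ => mul_mem_range_skewEval hY

lemma injective_comp_val_skewEvalSubalgebra (hY : ∀ p, ∃ q, Y * J p - J p * Y = J q)
    (φ : R →ₐ[F] R') (hφ : Function.Injective (skewEval (φ.comp J) (φ Y))) :
    Function.Injective (φ.comp (skewEvalSubalgebra hY).val) := by
  rintro ⟨_, c, rfl⟩ ⟨_, d, rfl⟩ h
  have : skewEval (φ.comp J) (φ Y) c = skewEval (φ.comp J) (φ Y) d := by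
    simpa [map_skewEval] using h
  rw [hφ this]

end SkewEval

lemma AlgHom.exists_injective_of_graph {F A B : Type*} [CommSemiring F] [Semiring A] [Algebra F A]
    [Semiring B] [Algebra F B] (S : Subalgebra F (A × B))
    (hfst : Function.Bijective ((AlgHom.fst F A B).comp S.val))
    (hsnd : Function.Injective ((AlgHom.snd F A B).comp S.val)) :
    ∃ f : A →ₐ[F] B, Function.Injective f ∧ ∀ s ∈ S, f s.1 = s.2 := by
  let e := AlgEquiv.ofBijective _ hfst
  refine ⟨((AlgHom.snd F A B).comp S.val).comp e.symm.toAlgHom, hsnd.comp e.symm.injective,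
    fun s hs => ?_⟩
  change (e.symm (e ⟨s, hs⟩) : A × B).2 = s.2
  rw [e.symm_apply_apply]

theorem stmt_11_general (F : Type*) [Field F]
    (T : Type*) [Ring T] [Algebra F T]
    (j : (Psub F) →ₐ[F] T) (y : T)
    (hrel : ∀ p q : Psub F,
      (q : FreeAlgebra F (Fin 3)) =
          FreeAlgebra.ι F (2 : Fin 3) * (p : FreeAlgebra F (Fin 3)) -
            (p : FreeAlgebra F (Fin 3)) * FreeAlgebra.ι F (2 : Fin 3) →
        y * j p - j p * y = j q)
    (hspan : ∀ t : T, ∃ (n : ℕ) (c : ℕ → Psub F),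
      t = ∑ i ∈ Finset.range (n + 1), j (c i) * y ^ i)
    (hfree : ∀ (n : ℕ) (c : ℕ → Psub F),
      (∑ i ∈ Finset.range (n + 1), j (c i) * y ^ i) = 0 → ∀ i ≤ n, c i = 0) :
    ∃ f : T →ₐ[F] FreeAlgebra F (Fin 3), Function.Injective f ∧
      ∀ (p : Psub F) (i : ℕ),
        f (j p * y ^ i) = (p : FreeAlgebra F (Fin 3)) * FreeAlgebra.ι F (2 : Fin 3) ^ i := by
  let J : Psub F →ₐ[F] T × FreeAlgebra F (Fin 3) := j.prod (Psub F).val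
  let Y : T × FreeAlgebra F (Fin 3) := (y, FreeAlgebra.ι F 2)
  have hY : ∀ p, ∃ q, Y * J p - J p * Y = J q := fun p =>
    ⟨⟨_, Psub.commutator_mem p.2⟩, Prod.ext (hrel p _ rfl) rfl⟩
  have hfst_inj := injective_comp_val_skewEvalSubalgebra hY (AlgHom.fst F _ _)
    (by rw [AlgHom.fst_prod]; exact skewEval_injective j y hfree)
  have hsnd_inj := injective_comp_val_skewEvalSubalgebra hY (AlgHom.snd F _ _)
    (by rw [AlgHom.snd_prod]; exact skewEval_injective _ _ Psub.eq_zero_of_sum_mul_pow_eq_zero)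
  have hfst_surj : Function.Surjective ((AlgHom.fst F _ _).comp (skewEvalSubalgebra hY).val) :=
    fun t => by
      obtain ⟨n, c, rfl⟩ := hspan t
      refine ⟨⟨_, ∑ i ∈ Finset.range (n + 1), Finsupp.single i (c i), rfl⟩, ?_⟩
      change AlgHom.fst F T (FreeAlgebra F (Fin 3)) (skewEval J Y _) = _
      rw [map_skewEval, AlgHom.fst_prod, skewEval_sum_single]
      rfl
  obtain ⟨f, hf_inj, hf⟩ :=
    AlgHom.exists_injective_of_graph _ ⟨hfst_inj, hfst_surj⟩ hsnd_inj
  exact ⟨f, hf_inj, fun p i =>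
    hf (J p * Y ^ i) ⟨Finsupp.single i p, skewEval_single J Y i p⟩⟩

/-- Let `F` be an infinite field and `D(c) = xc − cx` the derivation on `P`.
If `T` is (a copy of) the differential polynomial ring `P[y;D]` — i.e. an `F`-algebra
with an embedding `j : P → T` and an element `y` satisfying `y·j(p) − j(p)·y = j(D p)`
such that every element of `T` is uniquely `∑ j(p_i) y^i` — then the `F`-linear map
`f : P[y;D] → F⟨a,b,x⟩` with `f(p y^i) = p x^i` is an injective algebra homomorphism. -/
theorem stmt_11 (F : Type*) [Field F] [Infinite F]
    (T : Type*) [Ring T] [Algebra F T]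
    (j : (Psub F) →ₐ[F] T) (y : T)
    (hrel : ∀ p q : Psub F,
      (q : FreeAlgebra F (Fin 3)) =
          FreeAlgebra.ι F (2 : Fin 3) * (p : FreeAlgebra F (Fin 3)) -
            (p : FreeAlgebra F (Fin 3)) * FreeAlgebra.ι F (2 : Fin 3) →
        y * j p - j p * y = j q)
    (hspan : ∀ t : T, ∃ (n : ℕ) (c : ℕ → Psub F),
      t = ∑ i ∈ Finset.range (n + 1), j (c i) * y ^ i)
    (hfree : ∀ (n : ℕ) (c : ℕ → Psub F),
      (∑ i ∈ Finset.range (n + 1), j (c i) * y ^ i) = 0 → ∀ i ≤ n, c i = 0) :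
    ∃ f : T →ₐ[F] FreeAlgebra F (Fin 3), Function.Injective f ∧
      ∀ (p : Psub F) (i : ℕ),
        f (j p * y ^ i) = (p : FreeAlgebra F (Fin 3)) * FreeAlgebra.ι F (2 : Fin 3) ^ i :=
  stmt_11_general F T j y hrel hspan hfree
end

section
/- Let F be an infinite field, A' = F⟨a,b,x⟩, and P the smallest subalgebra of A' containing a, b and closed under c ↦ xc − cx. Then the sum Σ_{i≥0} P x^i is direct, i.e., if p_0 + p_1 x + ⋯ + p_n x^n = 0 with all p_i ∈ P, then p_0 = p_1 = ⋯ = p_n = 0. -/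
open Polynomial Finset

namespace Polynomial

theorem eq_zero_of_sum_C_mul_eq_zero {A : Type*} [Semiring A] {q : ℕ → A[X]}
    (hdeg : ∀ i, (q i).natDegree ≤ i) (hcoeff : ∀ i, (q i).coeff i = 1) {p : ℕ → A}
    {n : ℕ} (h : ∑ i ∈ range (n + 1), C (p i) * q i = 0) : ∀ i ≤ n, p i = 0 := by
  have coeff_top (m : ℕ) : (∑ i ∈ range (m + 1), C (p i) * q i).coeff m = p m := by
    rw [finsetSum_coeff, sum_range_succ, coeff_C_mul, hcoeff, mul_one,
      sum_eq_zero fun i hi => by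
        rw [coeff_C_mul, coeff_eq_zero_of_natDegree_lt ((hdeg i).trans_lt (mem_range.mp hi)),
          mul_zero],
      zero_add]
  induction n with
  | zero =>
    intro i hi
    rw [Nat.le_zero.mp hi, ← coeff_top, h, coeff_zero]
  | succ n ih =>
    have htop : p (n + 1) = 0 := by rw [← coeff_top, h, coeff_zero]
    rw [sum_range_succ, htop, C_0, zero_mul, add_zero] at h
    intro i hi
    rcases hi.lt_or_eq with hi | rfl
    exacts [ih h i (Nat.lt_succ_iff.mp hi), htop]

theorem eq_zero_of_sum_C_mul_X_add_C_pow_eq_zero {A : Type*} [Semiring A] (x : A) {p : ℕ → A}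
    {n : ℕ} (h : ∑ i ∈ range (n + 1), C (p i) * (X + C x) ^ i = 0) : ∀ i ≤ n, p i = 0 :=
  eq_zero_of_sum_C_mul_eq_zero
    (fun i => (natDegree_pow_le_of_le i (natDegree_add_C.trans_le natDegree_X_le)).trans_eq
      (mul_one i))
    (fun i => by simp [coeff_X_add_C_pow]) h

end Polynomial

section Translation

variable {R A : Type*} [CommSemiring R] [Ring A] [Algebra R A]
  {φ : A →ₐ[R] A[X]} {x : A}

theorem mul_sub_mul_mem_equalizer_CAlgHom (hx : φ x = X + C x) {c : A}
    (hc : c ∈ AlgHom.equalizer φ CAlgHom) : x * c - c * x ∈ AlgHom.equalizer φ CAlgHom := by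
  rw [AlgHom.mem_equalizer, CAlgHom_apply] at hc ⊢
  rw [map_sub, map_mul, map_mul, hc, hx, C_sub, C_mul, C_mul, add_mul, mul_add, X_mul_C]
  abel

theorem eq_zero_of_sum_mul_pow_eq_zero (hx : φ x = X + C x) {p : ℕ → A}
    (hp : ∀ i, φ (p i) = C (p i)) {n : ℕ} (h : ∑ i ∈ range (n + 1), p i * x ^ i = 0) :
    ∀ i ≤ n, p i = 0 := by
  apply eq_zero_of_sum_C_mul_X_add_C_pow_eq_zero x
  simpa only [map_sum, map_mul, map_pow, hp, hx, map_zero] using congrArg φ h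

end Translation

namespace FreeAlgebra

variable (R : Type*) [CommSemiring R] {σ : Type*} [DecidableEq σ]

noncomputable def translate (j : σ) : FreeAlgebra R σ →ₐ[R] (FreeAlgebra R σ)[X] :=
  lift R (Function.update (fun i => C (ι R i)) j (X + C (ι R j)))

theorem translate_ι_self (j : σ) : translate R j (ι R j) = X + C (ι R j) := by
  simp [translate]

theorem translate_ι_of_ne {i j : σ} (h : i ≠ j) : translate R j (ι R i) = C (ι R i) := by
  simp [translate, h]

end FreeAlgebra

theorem Psub_le_equalizer_translate (F : Type*) [Field F] :
    Psub F ≤ AlgHom.equalizer (FreeAlgebra.translate F 2) CAlgHom :=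
  sInf_le ⟨FreeAlgebra.translate_ι_of_ne F (show (0 : Fin 3) ≠ 2 by decide),
    FreeAlgebra.translate_ι_of_ne F (show (1 : Fin 3) ≠ 2 by decide),
    fun _ => mul_sub_mul_mem_equalizer_CAlgHom (FreeAlgebra.translate_ι_self F 2)⟩

theorem stmt_12_general (F : Type*) [Field F]
    (n : ℕ) (c : ℕ → Psub F)
    (h : ∑ i ∈ Finset.range (n + 1),
      (c i : FreeAlgebra F (Fin 3)) * FreeAlgebra.ι F (2 : Fin 3) ^ i = 0) :
    ∀ i ≤ n, (c i : FreeAlgebra F (Fin 3)) = 0 :=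
  eq_zero_of_sum_mul_pow_eq_zero (FreeAlgebra.translate_ι_self F 2)
    (fun i => Psub_le_equalizer_translate F (c i).2) h

/-- Over an infinite field, the sum `∑_{i≥0} P x^i` is direct: if
`p_0 + p_1 x + ⋯ + p_n x^n = 0` with all `p_i ∈ P`, then all `p_i = 0`. -/
theorem stmt_12 (F : Type*) [Field F] [Infinite F]
    (n : ℕ) (c : ℕ → Psub F)
    (h : ∑ i ∈ Finset.range (n + 1),
      (c i : FreeAlgebra F (Fin 3)) * FreeAlgebra.ι F (2 : Fin 3) ^ i = 0) :
    ∀ i ≤ n, (c i : FreeAlgebra F (Fin 3)) = 0 :=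
  stmt_12_general F n c h
end
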